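/- For every even integer b ≥ 2, the expected maximum of a uniformly random ±1-step walk of length b starting at 0 satisfies E[X_b] = 2^{−b} · ((b + 1/2)·C(b, b/2) − 2^{b−1}); equivalently, 2·∑_{m=0}^{b} m·f(m,b) = (2b+1)·C(b, b/2) − 2^{b}. -/

import Mathlib

/-- The value of a ±1 step: `true` is a rightward step (+1), `false` a leftward step (−1). -/
def stepVal (x : Bool) : ℤ := if x then 1 else -1

/-- The position after `k` steps (partial sum `S_k`) of the walk with steps `ε`. -/
def partialSum {b : ℕ} (ε : Fin b → Bool) (k : ℕ) : ℤ :=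
  ∑ i : Fin b, if (i : ℕ) < k then stepVal (ε i) else 0

/-- The maximum attained position `max { S_k : 0 ≤ k ≤ b }` of the walk with steps `ε`,
started at 0. -/
def walkMax {b : ℕ} (ε : Fin b → Bool) : ℤ :=
  (Finset.range (b + 1)).sup' Finset.nonempty_range_add_one (partialSum ε)

/-- `f m b` : the number of ±1-step walks of length `b` starting at 0 whose maximum
attained position equals `m`. -/
def f (m : ℤ) (b : ℕ) : ℕ :=
  (Finset.univ.filter (fun ε : Fin b → Bool => walkMax ε = m)).card

/-!
Reflecting a walk from its first visit to a height `m ≥ 0` onwards is an involution of the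
walks that reach `m`, and it exchanges final positions `S_b < m` and `S_b > m`. Hence
`#{max ≥ m} = #{S_b ≥ m} + #{S_b > m}`, and summing over `m ≥ 1` turns the total of the maxima
into `∑ (S_b⁺ + (S_b - 1)⁺)`. A walk with `k` up-steps ends at `2k - b`, so for `b = 2n` this
is the binomial sum `∑_{k > n} (4(k - n) - 1) C(2n, k)`: the part `∑_{k > n} (2k - 2n) C(2n, k)`
telescopes to `n C(2n, n)`, and `∑_{k > n} C(2n, k) = (4ⁿ - C(2n, n)) / 2` by symmetry.
-/

open Finset

lemma sum_Icc_ite_le (n : ℕ) {x : ℤ} (hx : x ≤ n) :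
    ∑ m ∈ Icc 1 n, (if (m : ℤ) ≤ x then 1 else 0 : ℤ) = max x 0 := by
  rw [sum_boole, show (Icc 1 n).filter (fun m : ℕ => (m : ℤ) ≤ x) = Icc 1 x.toNat by
    ext; simp only [mem_filter, mem_Icc]; omega, Nat.card_Icc]
  omega

lemma sum_Ioc_two_mul_sub_mul_choose {N j : ℕ} (hj : j ≤ N) :
    ∑ k ∈ Ioc j N, (2 * k - N : ℤ) * N.choose k = (N - j : ℤ) * N.choose j := by
  induction hj using Nat.decreasingInduction with
  | self => simp
  | of_succ j hj ih =>
    have hstep : ((N.choose (j + 1) * (j + 1) : ℕ) : ℤ) = (N.choose j * (N - j) : ℕ) := by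
      rw [Nat.choose_succ_right_eq]
    push_cast [Nat.cast_sub hj.le] at hstep
    rw [← Icc_add_one_left_eq_Ioc, ← insert_Icc_add_one_left_eq_Icc (by omega),
      sum_insert (by simp), Icc_add_one_left_eq_Ioc, ih]
    push_cast
    linear_combination hstep

lemma two_mul_sum_Ioc_choose_add_choose (n : ℕ) :
    2 * ∑ k ∈ Ioc n (2 * n), (2 * n).choose k + (2 * n).choose n = 4 ^ n := by
  have hsymm : ∑ k ∈ range n, (2 * n).choose k = ∑ k ∈ Ioc n (2 * n), (2 * n).choose k := by
    refine sum_nbij' (2 * n - ·) (2 * n - ·) ?_ ?_ ?_ ?_ ?_ <;> intro k hk <;>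
      simp only [mem_range, mem_Ioc] at hk ⊢
    iterate 4 omega
    exact (Nat.choose_symm (by omega)).symm
  rw [show 4 ^ n = 2 ^ (2 * n) by rw [pow_mul]; norm_num, ← Nat.sum_range_choose,
    ← sum_range_add_sum_Ico _ (by omega : n + 1 ≤ 2 * n + 1),
    sum_range_succ, hsymm, Ico_add_one_add_one_eq_Ioc]
  ring

lemma two_mul_sum_choose_mul_posPart (n : ℕ) :
    2 * ∑ k ∈ range (2 * n + 1),
        ((2 * n).choose k : ℤ) * (max (2 * k - 2 * n : ℤ) 0 + max (2 * k - 2 * n - 1 : ℤ) 0)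
      = (4 * n + 1) * (2 * n).choose n - 4 ^ n := by
  have hsupp : ∑ k ∈ range (2 * n + 1),
        ((2 * n).choose k : ℤ) * (max (2 * k - 2 * n : ℤ) 0 + max (2 * k - 2 * n - 1 : ℤ) 0)
      = ∑ k ∈ Ioc n (2 * n), (2 * ((2 * k - 2 * n : ℤ) * (2 * n).choose k) - (2 * n).choose k) := by
    have hsub : Ioc n (2 * n) ⊆ range (2 * n + 1) := fun k hk => by
      simp only [mem_Ioc, mem_range] at hk ⊢; omega
    refine (sum_subset hsub fun k hkr hk => ?_).symm.trans (sum_congr rfl fun k hk => ?_)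
    · simp only [mem_range, mem_Ioc, not_and, not_le] at hkr hk
      rw [max_eq_right (by omega), max_eq_right (by omega)]
      ring
    · simp only [mem_Ioc] at hk
      rw [max_eq_left (by omega), max_eq_left (by omega)]
      ring
  have hmad := sum_Ioc_two_mul_sub_mul_choose (by omega : n ≤ 2 * n)
  have htail := two_mul_sum_Ioc_choose_add_choose n
  push_cast at hmad
  zify at htail
  rw [hsupp, sum_sub_distrib, ← mul_sum, hmad]
  linear_combination -htail

section Walk

variable {b : ℕ}

lemma stepVal_not (x : Bool) : stepVal (!x) = -stepVal x := by
  cases x <;> rfl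

lemma stepVal_eq_one_or_neg_one (x : Bool) : stepVal x = 1 ∨ stepVal x = -1 := by
  cases x <;> simp [stepVal]

@[simp] lemma partialSum_zero (ε : Fin b → Bool) : partialSum ε 0 = 0 := by
  simp [partialSum]

lemma partialSum_succ (ε : Fin b → Bool) {k : ℕ} (hk : k < b) :
    partialSum ε (k + 1) = partialSum ε k + stepVal (ε ⟨k, hk⟩) := by
  have hcut : univ.filter (fun i : Fin b => ↑i < k + 1)
      = insert ⟨k, hk⟩ (univ.filter fun i : Fin b => ↑i < k) := by
    ext i
    simp only [mem_filter, mem_univ, true_and, mem_insert, Fin.ext_iff]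
    omega
  simp only [partialSum, ← sum_filter]
  rw [hcut, sum_insert (by simp), add_comm]

lemma partialSum_congr {ε ε' : Fin b → Bool} {k : ℕ} (h : ∀ i : Fin b, (i : ℕ) < k → ε i = ε' i) :
    partialSum ε k = partialSum ε' k :=
  sum_congr rfl fun i _ => by
    split_ifs with hi
    · rw [h i hi]
    · rfl

lemma partialSum_le (ε : Fin b → Bool) (k : ℕ) : partialSum ε k ≤ b := by
  have hstep : ∀ i ∈ (univ : Finset (Fin b)), (if (i : ℕ) < k then stepVal (ε i) else 0) ≤ 1 := by
    intro i _
    split_ifs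
    · rcases stepVal_eq_one_or_neg_one (ε i) with h | h <;> omega
    · omega
  simpa [partialSum] using sum_le_card_nsmul _ _ 1 hstep

lemma partialSum_self (ε : Fin b → Bool) : partialSum ε b = 2 * #{i | ε i} - b := by
  have hstep : ∀ i : Fin b, (if (i : ℕ) < b then stepVal (ε i) else 0)
      = 2 * (if ε i then 1 else 0) - 1 := by
    intro i
    cases ε i <;> simp [stepVal]
  simp only [partialSum, hstep, sum_sub_distrib, ← mul_sum, sum_boole]
  simp

lemma exists_partialSum_eq_of_le (ε : Fin b → Bool) {m : ℤ} (hm : 0 ≤ m) {n : ℕ} (hn : n ≤ b)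
    (h : m ≤ partialSum ε n) : ∃ t ≤ n, partialSum ε t = m := by
  induction n with
  | zero => exact ⟨0, le_rfl, by simp only [partialSum_zero] at h ⊢; omega⟩
  | succ n ih =>
    by_cases h' : m ≤ partialSum ε n
    · obtain ⟨t, ht, he⟩ := ih (by omega) h'
      exact ⟨t, by omega, he⟩
    · refine ⟨n + 1, le_rfl, ?_⟩
      rw [partialSum_succ ε (by omega)] at h ⊢
      rcases stepVal_eq_one_or_neg_one (ε ⟨n, by omega⟩) with hs | hs <;> omega

lemma partialSum_le_walkMax (ε : Fin b → Bool) {k : ℕ} (hk : k ≤ b) :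
    partialSum ε k ≤ walkMax ε :=
  le_sup' (partialSum ε) (mem_range.mpr (Nat.lt_succ_of_le hk))

lemma walkMax_nonneg (ε : Fin b → Bool) : 0 ≤ walkMax ε := by
  simpa using partialSum_le_walkMax ε (Nat.zero_le b)

lemma walkMax_le (ε : Fin b → Bool) : walkMax ε ≤ b :=
  sup'_le _ _ fun k _ => partialSum_le ε k

lemma le_walkMax_iff (ε : Fin b → Bool) {m : ℤ} (hm : 0 ≤ m) :
    m ≤ walkMax ε ↔ ∃ t ≤ b, partialSum ε t = m := by
  refine ⟨fun h => ?_, fun ⟨t, ht, he⟩ => he ▸ partialSum_le_walkMax ε ht⟩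
  obtain ⟨n, hn, hle⟩ := (le_sup'_iff _).mp h
  have hnb := Nat.lt_succ_iff.mp (mem_range.mp hn)
  obtain ⟨t, ht, he⟩ := exists_partialSum_eq_of_le ε hm hnb hle
  exact ⟨t, ht.trans hnb, he⟩

def reflectAt (m : ℤ) (ε : Fin b → Bool) : Fin b → Bool :=
  if h : ∃ t ≤ b, partialSum ε t = m then fun i => if (i : ℕ) < Nat.find h then ε i else !ε i
  else ε

section Reflection

variable {ε : Fin b → Bool} {m : ℤ} (h : ∃ t ≤ b, partialSum ε t = m)

lemma reflectAt_of_lt {i : Fin b} (hi : (i : ℕ) < Nat.find h) : reflectAt m ε i = ε i := by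
  rw [reflectAt, dif_pos h, if_pos hi]

lemma reflectAt_of_ge {i : Fin b} (hi : Nat.find h ≤ (i : ℕ)) : reflectAt m ε i = !ε i := by
  rw [reflectAt, dif_pos h, if_neg (by omega)]

lemma partialSum_reflectAt_of_le {k : ℕ} (hk : k ≤ Nat.find h) :
    partialSum (reflectAt m ε) k = partialSum ε k :=
  partialSum_congr fun _ hi => reflectAt_of_lt h (by omega)

lemma partialSum_reflectAt_of_ge {k : ℕ} (hk : Nat.find h ≤ k) (hkb : k ≤ b) :
    partialSum (reflectAt m ε) k = 2 * m - partialSum ε k := by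
  induction k, hk using Nat.le_induction with
  | base => rw [partialSum_reflectAt_of_le h le_rfl, (Nat.find_spec h).2]; ring
  | succ k hk ih =>
    rw [partialSum_succ _ (by omega), partialSum_succ _ (by omega),
      reflectAt_of_ge h (by exact hk), stepVal_not, ih (by omega)]
    ring

lemma partialSum_reflectAt_find : partialSum (reflectAt m ε) (Nat.find h) = m :=
  (partialSum_reflectAt_of_le h le_rfl).trans (Nat.find_spec h).2

lemma exists_partialSum_reflectAt_eq (h : ∃ t ≤ b, partialSum ε t = m) :
    ∃ t ≤ b, partialSum (reflectAt m ε) t = m :=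
  ⟨_, (Nat.find_spec h).1, partialSum_reflectAt_find h⟩

lemma find_reflectAt : Nat.find (exists_partialSum_reflectAt_eq h) = Nat.find h := by
  refine le_antisymm (Nat.find_min' _ ⟨(Nat.find_spec h).1, partialSum_reflectAt_find h⟩)
    (not_lt.mp fun hlt => Nat.find_min h hlt ?_)
  obtain ⟨ht, he⟩ := Nat.find_spec (exists_partialSum_reflectAt_eq h)
  exact ⟨ht, (partialSum_reflectAt_of_le h hlt.le).symm.trans he⟩

lemma reflectAt_reflectAt (h : ∃ t ≤ b, partialSum ε t = m) :
    reflectAt m (reflectAt m ε) = ε := by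
  funext i
  have h' := exists_partialSum_reflectAt_eq h
  by_cases hi : (i : ℕ) < Nat.find h
  · rw [reflectAt_of_lt h' (by rwa [find_reflectAt h]), reflectAt_of_lt h hi]
  · rw [reflectAt_of_ge h' (by rw [find_reflectAt h]; omega), reflectAt_of_ge h (by omega),
      Bool.not_not]

end Reflection

lemma card_le_walkMax_and_lt_eq_card_lt {m : ℤ} (hm : 0 ≤ m) :
    #{ε : Fin b → Bool | m ≤ walkMax ε ∧ partialSum ε b < m}
      = #{ε : Fin b → Bool | m < partialSum ε b} := by
  have hits : ∀ ε : Fin b → Bool, m ≤ walkMax ε → ∃ t ≤ b, partialSum ε t = m :=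
    fun ε => (le_walkMax_iff ε hm).mp
  have hits_of_lt : ∀ ε : Fin b → Bool, m < partialSum ε b → ∃ t ≤ b, partialSum ε t = m :=
    fun ε hlt => hits ε ((partialSum_le_walkMax ε le_rfl).trans' hlt.le)
  refine card_nbij' (reflectAt m) (reflectAt m) ?_ ?_ ?_ ?_ <;> intro ε hε <;>
    simp only [coe_filter, Set.mem_ofPred_eq, mem_univ, true_and] at hε ⊢
  · rw [partialSum_reflectAt_of_ge (hits ε hε.1) (Nat.find_spec (hits ε hε.1)).1 le_rfl]
    omega
  · have h := hits_of_lt ε hε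
    rw [le_walkMax_iff _ hm, partialSum_reflectAt_of_ge h (Nat.find_spec h).1 le_rfl]
    exact ⟨exists_partialSum_reflectAt_eq h, by omega⟩
  · exact reflectAt_reflectAt (hits ε hε.1)
  · exact reflectAt_reflectAt (hits_of_lt ε hε)

lemma card_le_walkMax {m : ℤ} (hm : 0 ≤ m) :
    #{ε : Fin b → Bool | m ≤ walkMax ε}
      = #{ε : Fin b → Bool | m ≤ partialSum ε b} + #{ε : Fin b → Bool | m < partialSum ε b} := by
  rw [← card_filter_add_card_filter_not (fun ε => m ≤ partialSum ε b), filter_filter,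
    filter_filter, ← card_le_walkMax_and_lt_eq_card_lt hm]
  congr 2
  · ext ε
    simpa using fun h => h.trans (partialSum_le_walkMax ε le_rfl)
  · ext ε
    simp

lemma sum_mul_f :
    ∑ m ∈ range (b + 1), (m : ℤ) * f m b = ∑ ε : Fin b → Bool, walkMax ε := by
  have hmaps : ∀ ε ∈ (univ : Finset (Fin b → Bool)), (walkMax ε).toNat ∈ range (b + 1) :=
    fun ε _ => mem_range.mpr (by have := walkMax_le ε; omega)
  rw [← sum_fiberwise_of_maps_to hmaps]
  refine sum_congr rfl fun m _ => ?_
  have hfiber : {ε ∈ (univ : Finset (Fin b → Bool)) | (walkMax ε).toNat = m}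
      = univ.filter fun ε => walkMax ε = m := by
    ext ε
    have := walkMax_nonneg ε
    simp only [mem_filter, mem_univ, true_and]
    omega
  rw [hfiber, sum_congr rfl fun ε hε => (mem_filter.mp hε).2, sum_const, f, nsmul_eq_mul,
    mul_comm]

lemma sum_walkMax :
    ∑ ε : Fin b → Bool, walkMax ε
      = ∑ ε : Fin b → Bool, (max (partialSum ε b) 0 + max (partialSum ε b - 1) 0) := by
  have hS : ∀ ε : Fin b → Bool, partialSum ε b - 1 ≤ b := fun ε => by
    linarith [partialSum_le ε b]
  calc ∑ ε : Fin b → Bool, walkMax ε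
      = ∑ m ∈ Icc 1 b, (#{ε : Fin b → Bool | (m : ℤ) ≤ walkMax ε} : ℤ) := by
        have hlayer : ∀ ε : Fin b → Bool,
            walkMax ε = ∑ m ∈ Icc 1 b, (if (m : ℤ) ≤ walkMax ε then 1 else 0 : ℤ) := fun ε => by
          rw [sum_Icc_ite_le b (walkMax_le ε), max_eq_left (walkMax_nonneg ε)]
        rw [sum_congr rfl fun ε _ => hlayer ε, sum_comm]
        simp only [sum_boole]
    _ = ∑ m ∈ Icc 1 b, ((#{ε : Fin b → Bool | (m : ℤ) ≤ partialSum ε b} : ℤ)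
          + #{ε : Fin b → Bool | (m : ℤ) ≤ partialSum ε b - 1}) := by
        refine sum_congr rfl fun m _ => ?_
        simp only [card_le_walkMax (Nat.cast_nonneg m), Int.lt_iff_add_one_le, ← le_sub_iff_add_le,
          Nat.cast_add]
    _ = _ := by
        simp only [← sum_Icc_ite_le b (partialSum_le _ b), ← sum_Icc_ite_le b (hS _),
          ← sum_add_distrib]
        rw [sum_comm]
        simp only [sum_add_distrib, sum_boole]

lemma sum_comp_partialSum_self {M : Type*} [AddCommMonoid M] (g : ℤ → M) :
    ∑ ε : Fin b → Bool, g (partialSum ε b) = ∑ k ∈ range (b + 1), b.choose k • g (2 * k - b) := by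
  have hcard := sum_powerset_apply_card (fun k => g (2 * k - b)) (x := (univ : Finset (Fin b)))
  rw [powerset_univ, card_univ, Fintype.card_fin] at hcard
  rw [← hcard]
  refine sum_nbij' (fun ε => univ.filter fun i => ε i) (fun s i => decide (i ∈ s))
    (by simp) (by simp) (fun ε _ => by ext; simp) (fun s _ => by ext; simp)
    fun ε _ => by rw [partialSum_self]

end Walk

/-- Proposition 3 (even case): for even `b ≥ 2`, the expected maximum of a uniformly
random ±1-step walk of length `b` is `2^{−b}·((b + 1/2)·C(b, b/2) − 2^{b−1})`;
equivalently, `2·∑_{m=0}^{b} m·f(m,b) = (2b+1)·C(b, b/2) − 2^b`. -/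
theorem expected_max_even (b : ℕ) (hb : 2 ≤ b) (hbe : Even b) :
    (∑ m ∈ Finset.range (b + 1), (m : ℚ) * (f m b : ℚ)) / 2 ^ b
      = (((b : ℚ) + 1 / 2) * (Nat.choose b (b / 2) : ℚ) - 2 ^ (b - 1)) / 2 ^ b ∧
    2 * ∑ m ∈ Finset.range (b + 1), (m : ℤ) * (f m b : ℤ)
      = (2 * (b : ℤ) + 1) * (Nat.choose b (b / 2) : ℤ) - 2 ^ b := by
  have hsum : 2 * ∑ m ∈ range (b + 1), (m : ℤ) * (f m b : ℤ)
      = (2 * (b : ℤ) + 1) * (Nat.choose b (b / 2) : ℤ) - 2 ^ b := by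
    obtain ⟨n, rfl⟩ := even_iff_two_dvd.mp hbe
    rw [sum_mul_f, sum_walkMax, sum_comp_partialSum_self (fun s => max s 0 + max (s - 1) 0),
      Nat.mul_div_cancel_left n two_pos, pow_mul]
    have h := two_mul_sum_choose_mul_posPart n
    push_cast at h ⊢
    linear_combination h
  refine ⟨?_, hsum⟩
  have hpow : (2 : ℚ) ^ b = 2 * 2 ^ (b - 1) := by rw [← pow_succ']; congr; omega
  have hsumℚ : (2 : ℚ) * ∑ m ∈ range (b + 1), (m : ℚ) * f m b
      = (2 * b + 1) * b.choose (b / 2) - 2 ^ b := by exact_mod_cast hsum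
  congr 1
  linarith
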